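/- Let a, b ∈ ℝ with a < b, and let f : (a,b) → ℝ be locally integrable on (a,b) (i.e. integrable on every compact subinterval of (a,b)) and measurable. Then lim_{n → ∞} ∫_a^b exp(i·f(u)·sin(n·u)) du = ∫_a^b J₀(f(u)) du. -/

import Mathlib

open MeasureTheory Filter Set
open scoped Topology

/-- Bessel function of the first kind of integer order `n`, defined via the integral
`J_n(x) = (1/(2π)) ∫_{-π}^{π} exp(i(x sin u − n u)) du` (whose value is real). -/
noncomputable def besselJ (n : ℤ) (x : ℝ) : ℝ :=
  ((2 * Real.pi : ℂ)⁻¹ *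
    ∫ u in (-Real.pi)..Real.pi,
      Complex.exp (Complex.I * ((x : ℂ) * (Real.sin u : ℂ) - (n : ℂ) * (u : ℂ)))).re

/-!
Jacobi–Anger: `exp (i x sin θ) = ∑ₖ Jₖ(x) e^{ikθ}`, where `Jₖ(x)` are the Fourier coefficients of
`θ ↦ exp (i x sin θ)`; integrating by parts twice gives `|Jₖ(x)| ≤ (x² + |x|) / k²`.
On the part of `(a, b)` where `|f| ≤ M` the series can therefore be integrated term by term and
the limit `n → ∞` taken term by term; by Riemann–Lebesgue every term with `k ≠ 0` tends to `0`,
leaving `∫ J₀(f)`. Since all integrands are bounded by `1`, the rest of `(a, b)`, whose measure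
tends to `0` as `M → ∞`, does not matter.
-/

open Complex
open scoped Real

section FourierCoeff

variable {E : Type*} [NormedAddCommGroup E] [NormedSpace ℂ E]

theorem norm_fourierCoeff_le {T : ℝ} [Fact (0 < T)] {f : AddCircle T → E} {C : ℝ}
    (hf : ∀ t, ‖f t‖ ≤ C) (n : ℤ) : ‖fourierCoeff f n‖ ≤ C := by
  refine (norm_integral_le_of_norm_le_const (C := C) (Eventually.of_forall fun t => ?_)).trans ?_
  · rw [norm_smul, fourier_apply, Circle.norm_coe, one_mul]
    exact hf t
  · simp

theorem norm_fourierCoeffOn_le {a b : ℝ} (hab : a < b) {f : ℝ → E} {C : ℝ}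
    (hf : ∀ x, ‖f x‖ ≤ C) (n : ℤ) : ‖fourierCoeffOn hab f n‖ ≤ C :=
  haveI := Fact.mk (sub_pos.2 hab)
  norm_fourierCoeff_le (fun _ => hf _) n

end FourierCoeff

theorem fourierCoeffOn_eq_mul_fourierCoeffOn_deriv {a b : ℝ} (hab : a < b) {f f' : ℝ → ℂ}
    {n : ℤ} (hn : n ≠ 0) (hf : ∀ x, HasDerivAt f (f' x) x)
    (hf' : IntervalIntegrable f' volume a b) (hper : f b = f a) :
    fourierCoeffOn hab f n = (b - a) / (2 * π * I * n) * fourierCoeffOn hab f' n := by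
  rw [fourierCoeffOn_of_hasDerivAt hab hn (fun x _ => hf x) hf', hper, sub_self, mul_zero,
    zero_sub]
  have : (2 * π * I * n : ℂ) ≠ 0 := by simp [hn, Real.pi_ne_zero, I_ne_zero]
  field_simp

theorem norm_fourierCoeffOn_le_of_hasDerivAt_twice {a b : ℝ} (hab : a < b) {f f' f'' : ℝ → ℂ}
    {n : ℤ} (hn : n ≠ 0) (hf : ∀ x, HasDerivAt f (f' x) x) (hf' : ∀ x, HasDerivAt f' (f'' x) x)
    (hf'' : IntervalIntegrable f'' volume a b) (hper : f b = f a) (hper' : f' b = f' a)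
    {C : ℝ} (hC : ∀ x, ‖f'' x‖ ≤ C) :
    ‖fourierCoeffOn hab f n‖ ≤ ((b - a) / (2 * π * n)) ^ 2 * C := by
  have hf'_int : IntervalIntegrable f' volume a b :=
    (continuous_iff_continuousAt.2 fun x => (hf' x).continuousAt).intervalIntegrable a b
  rw [fourierCoeffOn_eq_mul_fourierCoeffOn_deriv hab hn hf hf'_int hper,
    fourierCoeffOn_eq_mul_fourierCoeffOn_deriv hab hn hf' hf'' hper', ← mul_assoc, norm_mul]
  have hnorm : ‖(b - a) / (2 * π * I * n) * ((b - a) / (2 * π * I * n))‖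
      = ((b - a) / (2 * π * n)) ^ 2 := by
    rw [← sq, norm_pow, norm_div, norm_mul, norm_mul, norm_mul, Complex.norm_I, ← ofReal_sub,
      norm_real, Real.norm_of_nonneg (sub_pos.2 hab).le, norm_intCast]
    simp [div_pow, mul_pow, abs_of_pos Real.pi_pos]
  rw [hnorm]
  gcongr
  exact norm_fourierCoeffOn_le hab hC n

theorem summable_inv_one_add_sq : Summable (fun k : ℤ => (1 + (k : ℝ) ^ 2)⁻¹) := by
  refine (Real.summable_one_div_int_pow.mpr one_lt_two).of_norm_bounded_eventually ?_
  filter_upwards [eventually_cofinite_ne 0] with k hk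
  have : (k : ℝ) ≠ 0 := by exact_mod_cast hk
  rw [Real.norm_of_nonneg (by positivity), one_div]
  exact inv_anti₀ (by positivity) (by linarith)

theorem tendsto_setIntegral_mul_exp_nat_mul {s : Set ℝ} (hs : MeasurableSet s) (g : ℝ → ℂ)
    {k : ℝ} (hk : k ≠ 0) :
    Tendsto (fun n : ℕ => ∫ u in s, g u * exp (I * k * (n * u : ℝ))) atTop (𝓝 0) := by
  have hfreq : Tendsto (fun n : ℕ => -k / (2 * π) * n) atTop (cocompact ℝ) :=
    (tendsto_cocompact_mul_left₀ (by simp [hk, Real.pi_ne_zero])).comp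
      (tendsto_natCast_atTop_atTop.mono_right atTop_le_cocompact)
  refine ((Real.tendsto_integral_exp_smul_cocompact (s.indicator g)).comp hfreq).congr fun n => ?_
  rw [Function.comp_apply, ← integral_indicator hs]
  congr 1 with u
  by_cases hu : u ∈ s
  · rw [indicator_of_mem hu, indicator_of_mem hu, Circle.smul_def, Real.fourierChar_apply,
      smul_eq_mul, mul_comm]
    congr 2
    push_cast
    field_simp
  · rw [indicator_of_notMem hu, indicator_of_notMem hu, smul_zero]

theorem tendsto_setIntegral_iUnion_of_tendsto {α E : Type*} [MeasurableSpace α]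
    [NormedAddCommGroup E] [NormedSpace ℝ E] {μ : Measure α} {A : ℕ → Set α}
    (hA_meas : ∀ M, MeasurableSet (A M)) (hA_mono : Monotone A) (hA_fin : μ (⋃ M, A M) ≠ ⊤)
    {F : ℕ → α → E} {G : α → E} {C : ℝ} (hF_meas : ∀ n, AEStronglyMeasurable (F n) μ)
    (hG_meas : AEStronglyMeasurable G μ) (hF : ∀ n x, ‖F n x‖ ≤ C) (hG : ∀ x, ‖G x‖ ≤ C)
    (h : ∀ M, Tendsto (fun n => ∫ x in A M, F n x ∂μ) atTop (𝓝 (∫ x in A M, G x ∂μ))) :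
    Tendsto (fun n => ∫ x in ⋃ M, A M, F n x ∂μ) atTop (𝓝 (∫ x in ⋃ M, A M, G x ∂μ)) := by
  set S := ⋃ M, A M
  have hrest_fin (M : ℕ) : μ (S \ A M) < ⊤ := (measure_mono sdiff_subset).trans_lt hA_fin.lt_top
  have hrest : Tendsto (fun M => C * μ.real (S \ A M)) atTop (𝓝 0) := by
    have := tendsto_measure_iInter_atTop (μ := μ) (s := fun M => S \ A M)
      (fun M => ((MeasurableSet.iUnion hA_meas).diff (hA_meas M)).nullMeasurableSet)
      (fun M N hMN => sdiff_subset_sdiff_right (hA_mono hMN)) ⟨0, (hrest_fin 0).ne⟩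
    rw [show (⋂ M, S \ A M) = ∅ by simp [S, ← sdiff_iUnion], measure_empty] at this
    have := ((ENNReal.tendsto_toReal ENNReal.zero_ne_top).comp this).const_mul C
    rwa [ENNReal.toReal_zero, mul_zero] at this
  have hunif : TendstoUniformly (fun M n => ∫ x in A M, F n x ∂μ)
      (fun n => ∫ x in S, F n x ∂μ) atTop := by
    rw [Metric.tendstoUniformly_iff]
    intro ε hε
    filter_upwards [hrest.eventually (gt_mem_nhds hε)] with M hM n
    rw [dist_eq_norm, ← setIntegral_sdiff (hA_meas M)
      (Measure.integrableOn_of_bounded hA_fin (hF_meas n) (ae_of_all _ (hF n)))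
      (subset_iUnion A M)]
    exact (norm_setIntegral_le_of_norm_le_const (hrest_fin M) fun x _ => hF n x).trans_lt hM
  exact hunif.tendsto_of_eventually_tendsto (Eventually.of_forall h)
    (tendsto_setIntegral_of_monotone hA_meas hA_mono
      (Measure.integrableOn_of_bounded hA_fin hG_meas (ae_of_all _ hG)))

noncomputable def expISin (x θ : ℝ) : ℂ := exp (I * x * Real.sin θ)

instance fact_zero_lt_two_pi : Fact (0 < 2 * π) := ⟨Real.two_pi_pos⟩

-- `Real.Angle` is `AddCircle (2 * π)`, so `Real.Angle.sin` is `sin` descended to the circle.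
noncomputable def expISinCircle (x : ℝ) : C(AddCircle (2 * π), ℂ) :=
  ⟨fun θ => exp (I * x * Real.Angle.sin θ), by have := Real.Angle.continuous_sin; fun_prop⟩

noncomputable def besselCoeff (k : ℤ) (x : ℝ) : ℂ := fourierCoeff (expISinCircle x) k

theorem expISinCircle_coe (x θ : ℝ) : expISinCircle x θ = expISin x θ :=
  rfl

theorem norm_expISin (x θ : ℝ) : ‖expISin x θ‖ = 1 := by
  rw [expISin, norm_exp]
  simp

theorem liftIoc_expISin (a x : ℝ) :
    AddCircle.liftIoc (2 * π) a (expISin x) = expISinCircle x := by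
  funext t
  conv_rhs => rw [← AddCircle.coe_equivIoc (a := a) (y := t), expISinCircle_coe]
  rfl

theorem besselCoeff_eq_fourierCoeffOn (a : ℝ) (k : ℤ) (x : ℝ) :
    besselCoeff k x = fourierCoeffOn (lt_add_of_pos_right a Real.two_pi_pos) (expISin x) k := by
  rw [besselCoeff, ← liftIoc_expISin a, fourierCoeff_liftIoc_eq]

theorem besselCoeff_eq_integral (k : ℤ) (x : ℝ) :
    besselCoeff k x = (2 * π : ℂ)⁻¹ * ∫ θ in -π..π, exp (I * (x * Real.sin θ - k * θ)) := by
  have hπ : -π + 2 * π = π := by ring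
  rw [besselCoeff, fourierCoeff_eq_intervalIntegral _ _ (-π), hπ, one_div, real_smul]
  congr 1
  · push_cast
    rfl
  refine intervalIntegral.integral_congr fun θ _ => ?_
  rw [smul_eq_mul, expISinCircle_coe, fourier_coe_apply, expISin, ← exp_add]
  congr 1
  push_cast
  field_simp
  ring

theorem continuous_besselCoeff (k : ℤ) : Continuous (besselCoeff k) := by
  simp_rw [funext (besselCoeff_eq_integral k)]
  exact continuous_const.mul
    (intervalIntegral.continuous_parametric_intervalIntegral_of_continuous' (by fun_prop) _ _)

theorem ofReal_besselJ (k : ℤ) (x : ℝ) : (besselJ k x : ℂ) = besselCoeff k x := by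
  rw [besselJ, ← besselCoeff_eq_integral, ← conj_eq_iff_re, besselCoeff_eq_integral, map_mul,
    ← intervalIntegral.intervalIntegral_conj]
  congr 1
  · simp [map_ofNat]
  conv_rhs => rw [← neg_neg π, ← intervalIntegral.integral_comp_neg, neg_neg]
  refine intervalIntegral.integral_congr fun θ _ => ?_
  rw [← exp_conj]
  simp only [map_mul, map_sub, conj_I, conj_ofReal, map_intCast, ofReal_neg, Real.sin_neg]
  ring_nf

theorem hasDerivAt_expISin (x θ : ℝ) :
    HasDerivAt (expISin x) (I * x * Real.cos θ * expISin x θ) θ := by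
  have := ((Real.hasDerivAt_sin θ).ofReal_comp.const_mul (I * x)).cexp
  unfold expISin
  convert this using 1
  ring

theorem hasDerivAt_cos_mul_expISin (x θ : ℝ) :
    HasDerivAt (fun θ => I * x * Real.cos θ * expISin x θ)
      ((-(x ^ 2 * Real.cos θ ^ 2) - I * x * Real.sin θ) * expISin x θ) θ := by
  refine (((Real.hasDerivAt_cos θ).ofReal_comp.const_mul (I * x)).mul
    (hasDerivAt_expISin x θ)).congr_deriv ?_
  rw [ofReal_neg]
  linear_combination ((x : ℂ) ^ 2 * (Real.cos θ : ℂ) ^ 2 * expISin x θ) * I_sq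

theorem norm_besselCoeff_le_one (k : ℤ) (x : ℝ) : ‖besselCoeff k x‖ ≤ 1 :=
  norm_fourierCoeff_le (fun t => by
    induction t using QuotientAddGroup.induction_on with
    | H θ => rw [expISinCircle_coe, norm_expISin]) k

theorem norm_besselCoeff_le_of_ne_zero {k : ℤ} (hk : k ≠ 0) (x : ℝ) :
    ‖besselCoeff k x‖ ≤ (x ^ 2 + |x|) / k ^ 2 := by
  have hbound : ∀ θ, ‖(-(x ^ 2 * Real.cos θ ^ 2) - I * x * Real.sin θ) * expISin x θ‖
      ≤ x ^ 2 + |x| := by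
    intro θ
    rw [norm_mul, norm_expISin, mul_one]
    refine (norm_sub_le _ _).trans (add_le_add ?_ ?_)
    · rw [norm_neg, ← ofReal_pow, ← ofReal_pow, ← ofReal_mul, norm_real, Real.norm_eq_abs,
        abs_of_nonneg (by positivity)]
      nlinarith [Real.cos_sq_le_one θ, sq_nonneg x]
    · rw [norm_mul, norm_mul, norm_I, one_mul, norm_real, norm_real, Real.norm_eq_abs,
        Real.norm_eq_abs]
      exact mul_le_of_le_one_right (abs_nonneg x) (Real.abs_sin_le_one θ)
  rw [besselCoeff_eq_fourierCoeffOn 0]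
  refine (norm_fourierCoeffOn_le_of_hasDerivAt_twice _ hk (hasDerivAt_expISin x)
    (hasDerivAt_cos_mul_expISin x)
    (Continuous.intervalIntegrable (by unfold expISin; fun_prop) _ _)
    (by simp [expISin]) (by simp [expISin]) hbound).trans_eq ?_
  have : (k : ℝ) ≠ 0 := by exact_mod_cast hk
  field_simp
  ring

-- Unlike `(x ^ 2 + |x|) / k ^ 2`, which is `0` at `k = 0`, this bound also holds for `k = 0`.
theorem norm_besselCoeff_le (k : ℤ) (x : ℝ) :
    ‖besselCoeff k x‖ ≤ 2 * (1 + |x|) ^ 2 * (1 + (k : ℝ) ^ 2)⁻¹ := by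
  rcases eq_or_ne k 0 with rfl | hk
  · refine (norm_besselCoeff_le_one 0 x).trans ?_
    simp only [Int.cast_zero, ne_eq, OfNat.ofNat_ne_zero, not_false_eq_true, zero_pow, add_zero,
      inv_one, mul_one]
    nlinarith [abs_nonneg x]
  · refine (norm_besselCoeff_le_of_ne_zero hk x).trans ?_
    have hk1 : (1 : ℝ) ≤ (k : ℝ) ^ 2 :=
      (one_le_sq_iff_one_le_abs _).2 (by exact_mod_cast Int.one_le_abs hk)
    rw [← div_eq_mul_inv, div_le_div_iff₀ (by linarith) (by positivity)]
    nlinarith [abs_nonneg x, sq_abs x]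

theorem summable_besselCoeff (x : ℝ) : Summable (fun k : ℤ => besselCoeff k x) :=
  (summable_inv_one_add_sq.mul_left _).of_norm_bounded (norm_besselCoeff_le · x)

theorem hasSum_besselCoeff_mul_exp (x θ : ℝ) :
    HasSum (fun k : ℤ => besselCoeff k x * exp (I * k * θ)) (expISin x θ) := by
  have := has_pointwise_sum_fourier_series_of_summable (summable_besselCoeff x)
    (θ : AddCircle (2 * π))
  rw [expISinCircle_coe] at this
  convert this using 2 with k
  rw [smul_eq_mul, fourier_coe_apply]
  congr 2
  push_cast
  field_simp

theorem tendsto_setIntegral_expISin_nat_mul_of_abs_le {s : Set ℝ} (hs : MeasurableSet s)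
    (hs' : volume s ≠ ⊤) {f : ℝ → ℝ} (hf : Measurable f) {M : ℝ} (hM : ∀ u ∈ s, |f u| ≤ M) :
    Tendsto (fun n : ℕ => ∫ u in s, expISin (f u) (n * u)) atTop
      (𝓝 (∫ u in s, besselCoeff 0 (f u))) := by
  have : IsFiniteMeasure (volume.restrict s) := isFiniteMeasure_restrict.2 hs'
  set bound : ℤ → ℝ := fun k => 2 * (1 + M) ^ 2 * (1 + (k : ℝ) ^ 2)⁻¹
  have hbound_summable : Summable bound := summable_inv_one_add_sq.mul_left _
  have hterm_le : ∀ (k : ℤ) (θ u : ℝ), u ∈ s →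
      ‖besselCoeff k (f u) * exp (I * k * θ)‖ ≤ bound k := by
    intro k θ u hu
    have hexp : ‖exp (I * k * θ)‖ = 1 := by simp [norm_exp]
    rw [norm_mul, hexp, mul_one]
    refine (norm_besselCoeff_le k (f u)).trans ?_
    have := hM u hu
    simp only [bound]
    gcongr
  have hmeas : ∀ (k : ℤ) (n : ℕ),
      AEStronglyMeasurable (fun u => besselCoeff k (f u) * exp (I * k * (n * u : ℝ)))
        (volume.restrict s) :=
    fun k n =>
      (((continuous_besselCoeff k).measurable.comp hf).mul (by fun_prop)).aestronglyMeasurable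
  have hsum : ∀ n : ℕ,
      HasSum (fun k : ℤ => ∫ u in s, besselCoeff k (f u) * exp (I * k * (n * u : ℝ)))
        (∫ u in s, expISin (f u) (n * u)) := fun n =>
    hasSum_integral_of_dominated_convergence (fun k _ => bound k) (fun k => hmeas k n)
      (fun k => ae_restrict_of_forall_mem hs fun u hu => hterm_le k _ u hu)
      (ae_of_all _ fun _ => hbound_summable) (integrable_const _)
      (ae_of_all _ fun u => hasSum_besselCoeff_mul_exp (f u) (n * u))
  have hlim : ∀ k : ℤ,
      Tendsto (fun n : ℕ => ∫ u in s, besselCoeff k (f u) * exp (I * k * (n * u : ℝ))) atTop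
        (𝓝 (if k = 0 then ∫ u in s, besselCoeff 0 (f u) else 0)) := by
    intro k
    rcases eq_or_ne k 0 with rfl | hk
    · simp
    · simpa [hk] using tendsto_setIntegral_mul_exp_nat_mul hs (fun u => besselCoeff k (f u))
        (Int.cast_ne_zero.2 hk)
  have := tendsto_tsum_of_dominated_convergence (hbound_summable.mul_right (volume.real s)) hlim
    (Eventually.of_forall fun n k => norm_setIntegral_le_of_norm_le_const hs'.lt_top
      fun u hu => hterm_le k _ u hu)
  rw [tsum_ite_eq] at this
  exact this.congr fun n => (hsum n).tsum_eq

theorem tendsto_integral_exp_sin_locInt_general (a b : ℝ) (f : ℝ → ℝ)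
    (hmeas : Measurable f) :
    Tendsto
      (fun n : ℕ =>
        ∫ u in Set.Ioo a b, Complex.exp (Complex.I * (f u : ℂ) * (Real.sin (n * u) : ℂ)))
      atTop (nhds (∫ u in Set.Ioo a b, (besselJ 0 (f u) : ℂ))) := by
  set A : ℕ → Set ℝ := fun M => Ioo a b ∩ {u | |f u| ≤ M}
  have hA_meas (M : ℕ) : MeasurableSet (A M) :=
    measurableSet_Ioo.inter (measurableSet_le hmeas.abs measurable_const)
  have hA_mono : Monotone A := fun M N hMN =>
    inter_subset_inter_right _ fun u (hu : |f u| ≤ M) => hu.trans (Nat.cast_le.2 hMN)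
  have hA_iUnion : ⋃ M, A M = Ioo a b := by
    rw [← inter_iUnion, inter_eq_left]
    exact fun u _ => mem_iUnion.2 (exists_nat_ge |f u|)
  simp_rw [ofReal_besselJ]
  rw [← hA_iUnion]
  have hF_meas (n : ℕ) : Measurable fun u => expISin (f u) (n * u) := by
    unfold expISin
    fun_prop
  refine tendsto_setIntegral_iUnion_of_tendsto hA_meas hA_mono
    (hA_iUnion ▸ measure_Ioo_lt_top.ne) (C := 1) (fun n => (hF_meas n).aestronglyMeasurable)
    ((continuous_besselCoeff 0).measurable.comp hmeas).aestronglyMeasurable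
    (fun n u => (norm_expISin _ _).le) (fun u => norm_besselCoeff_le_one 0 _)
    fun M => tendsto_setIntegral_expISin_nat_mul_of_abs_le (hA_meas M)
      ((measure_mono inter_subset_left).trans_lt measure_Ioo_lt_top).ne hmeas fun u hu => hu.2

/-- If `a < b` are real and `f` is measurable and locally integrable on `(a,b)`, then
`∫_a^b exp(i f(u) sin(n u)) du → ∫_a^b J₀(f(u)) du` as `n → ∞`. -/
theorem tendsto_integral_exp_sin_locInt (a b : ℝ) (hab : a < b) (f : ℝ → ℝ)
    (hmeas : Measurable f)
    (hloc : LocallyIntegrableOn f (Set.Ioo a b)) :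
    Tendsto
      (fun n : ℕ =>
        ∫ u in Set.Ioo a b, Complex.exp (Complex.I * (f u : ℂ) * (Real.sin (n * u) : ℂ)))
      atTop (nhds (∫ u in Set.Ioo a b, (besselJ 0 (f u) : ℂ))) :=
  tendsto_integral_exp_sin_locInt_general a b f hmeas
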